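/- arXiv:0910.0284 — 2 statements merged into one kernel-verified Lean document; each statement's English description precedes it below -/
import Mathlib

section
/- For subspaces Z, R, S, T of a finite-dimensional vector space V, H(Z|R) + I(R;S|T) ≥ I(Z;S|T) + H(Z|R+S+T), where H(X|Y) = dim(X+Y) - dim Y and I(X;Y|T) = dim(X+T) + dim(Y+T) - dim(X+Y+T) - dim T. -/
/-! The defect `condH Z R + condI R S T - condI Z S T - condH Z (R ⊔ S ⊔ T)` splits as
`I(Z;T|R) + I(R;S|Z+T)`, and a conditional mutual information of subspaces is the dimension of
`(X+T) ∩ (Y+T)` in excess of `dim T`, hence nonnegative. -/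

open Module

noncomputable def condH {F V : Type*} [Field F] [AddCommGroup V] [Module F V]
    (X Y : Submodule F V) : ℤ :=
  (finrank F ↑(X ⊔ Y) : ℤ) - finrank F ↑Y

noncomputable def mutI {F V : Type*} [Field F] [AddCommGroup V] [Module F V]
    (X Y : Submodule F V) : ℤ :=
  (finrank F ↑X : ℤ) + finrank F ↑Y - finrank F ↑(X ⊔ Y)

noncomputable def condI {F V : Type*} [Field F] [AddCommGroup V] [Module F V]
    (X Y T : Submodule F V) : ℤ :=
  (finrank F ↑(X ⊔ T) : ℤ) + finrank F ↑(Y ⊔ T) - finrank F ↑(X ⊔ Y ⊔ T) - finrank F ↑T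

section

variable {F V : Type*} [Field F] [AddCommGroup V] [Module F V]

theorem condI_eq_finrank_inf_sub [FiniteDimensional F V] (X Y T : Submodule F V) :
    condI X Y T = (finrank F ↑((X ⊔ T) ⊓ (Y ⊔ T)) : ℤ) - finrank F ↑T := by
  have modular := Submodule.finrank_sup_add_finrank_inf_eq (X ⊔ T) (Y ⊔ T)
  rw [← sup_sup_distrib_right] at modular
  unfold condI
  omega

theorem condI_nonneg [FiniteDimensional F V] (X Y T : Submodule F V) : 0 ≤ condI X Y T := by
  rw [condI_eq_finrank_inf_sub, sub_nonneg, Nat.cast_le]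
  exact Submodule.finrank_mono (le_inf le_sup_right le_sup_right)

theorem condH_add_condI_eq (Z R S T : Submodule F V) :
    condH Z R + condI R S T =
      condI Z S T + condH Z (R ⊔ S ⊔ T) + condI Z T R + condI R S (Z ⊔ T) := by
  have h₁ : T ⊔ R = R ⊔ T := sup_comm T R
  have h₂ : Z ⊔ T ⊔ R = R ⊔ (Z ⊔ T) := sup_comm _ _
  have h₃ : S ⊔ (Z ⊔ T) = Z ⊔ S ⊔ T := by ac_rfl
  have h₄ : R ⊔ S ⊔ (Z ⊔ T) = Z ⊔ (R ⊔ S ⊔ T) := by ac_rfl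
  unfold condH condI
  rw [h₁, h₂, h₃, h₄]
  ring

end

theorem stmt2 {F V : Type*} [Field F] [AddCommGroup V] [Module F V] [FiniteDimensional F V]
    (Z R S T : Submodule F V) :
    condH Z R + condI R S T ≥ condI Z S T + condH Z (R ⊔ S ⊔ T) := by
  rw [condH_add_condI_eq]
  linarith [condI_nonneg Z T R, condI_nonneg R S (Z ⊔ T)]
end

section
/- For subspaces A, B, C, D, E of a finite-dimensional vector space V, 2·I(A;B) ≤ I(A;B|C) + I(A;B|D) + I(A;B|E) + I(C;D) + I(C+D;E), where I(X;Y) = dim X + dim Y - dim(X+Y) and I(X;Y|T) = dim(X+T) + dim(Y+T) - dim(X+Y+T) - dim T. -/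
open Module

/-!
Put `W = A ⊓ B`, so that `I(A;B) = dim W`. Conditioning on `T` can only lose the part of `W`
absorbed by `T`: `I(A;B|T) ≥ dim (W + T) - dim T = dim W - dim (W ∩ T)`. It remains to see
`dim (W ∩ C) + dim (W ∩ D) + dim (W ∩ E) ≤ dim W + I(C;D) + I(C+D;E)`, which follows from two
applications of the modular law for dimensions inside `W`.
-/

section

variable {F V : Type*} [Field F] [AddCommGroup V] [Module F V]

theorem condI_eq_mutI_sup_sub_finrank (X Y T : Submodule F V) :
    condI X Y T = mutI (X ⊔ T) (Y ⊔ T) - finrank F T := by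
  rw [condI, mutI, sup_sup_sup_comm, sup_idem]

theorem condH_eq_finrank_sub_mutI (X T : Submodule F V) :
    condH X T = finrank F X - mutI X T := by
  rw [condH, mutI]
  ring

variable [FiniteDimensional F V]

theorem mutI_eq_finrank_inf (X Y : Submodule F V) : mutI X Y = finrank F ↑(X ⊓ Y) := by
  have h := Submodule.finrank_sup_add_finrank_inf_eq X Y
  rw [mutI]
  omega

theorem mutI_mono {X X' Y Y' : Submodule F V} (hX : X ≤ X') (hY : Y ≤ Y') :
    mutI X Y ≤ mutI X' Y' := by
  rw [mutI_eq_finrank_inf, mutI_eq_finrank_inf]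
  exact_mod_cast Submodule.finrank_mono (inf_le_inf hX hY)

theorem condH_inf_le_condI (X Y T : Submodule F V) : condH (X ⊓ Y) T ≤ condI X Y T := by
  have h : X ⊓ Y ⊔ T ≤ (X ⊔ T) ⊓ (Y ⊔ T) :=
    le_inf (sup_le_sup_right inf_le_left T) (sup_le_sup_right inf_le_right T)
  rw [condI_eq_mutI_sup_sub_finrank, mutI_eq_finrank_inf, condH]
  have := Submodule.finrank_mono h
  omega

theorem finrank_add_mutI_le (W X Y : Submodule F V) (hX : X ≤ W) (hY : Y ≤ W) :
    finrank F X + finrank F Y ≤ finrank F W + mutI X Y := by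
  have h := Submodule.finrank_sup_add_finrank_inf_eq X Y
  have hW := Submodule.finrank_mono (sup_le hX hY)
  rw [mutI_eq_finrank_inf]
  omega

theorem mutI_add_mutI_add_mutI_le (W C D E : Submodule F V) :
    mutI W C + mutI W D + mutI W E ≤ finrank F W + mutI C D + mutI (C ⊔ D) E := by
  have hCD := finrank_add_mutI_le (W ⊓ C ⊔ W ⊓ D) (W ⊓ C) (W ⊓ D) le_sup_left le_sup_right
  have hCDE := finrank_add_mutI_le W (W ⊓ C ⊔ W ⊓ D) (W ⊓ E)
    (sup_le inf_le_left inf_le_left) inf_le_left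
  have hCD' := mutI_mono (X := W ⊓ C) (Y := W ⊓ D) inf_le_right inf_le_right
  have hCDE' := mutI_mono (X := W ⊓ C ⊔ W ⊓ D) (Y := W ⊓ E)
    (sup_le_sup inf_le_right inf_le_right) inf_le_right
  rw [mutI_eq_finrank_inf W C, mutI_eq_finrank_inf W D, mutI_eq_finrank_inf W E]
  omega

end

theorem stmt8 {F V : Type*} [Field F] [AddCommGroup V] [Module F V] [FiniteDimensional F V]
    (A B C D E : Submodule F V) :
    2 * mutI A B ≤ condI A B C + condI A B D + condI A B E + mutI C D + mutI (C ⊔ D) E := by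
  have hC := condH_inf_le_condI A B C
  have hD := condH_inf_le_condI A B D
  have hE := condH_inf_le_condI A B E
  have hW := mutI_add_mutI_add_mutI_le (A ⊓ B) C D E
  rw [condH_eq_finrank_sub_mutI] at hC hD hE
  rw [mutI_eq_finrank_inf A B]
  omega
end
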